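/- arXiv:1703.08419 — 4 statements merged into one kernel-verified Lean document; each statement's English description precedes it below -/
import Mathlib

section
/- Over a field k of characteristic ≠ 2, the elliptic curve over k(t) defined by y² + txy = x³ + t³x has exactly one nontrivial 2-torsion point rational over k(t), namely (0,0). -/
open WeierstrassCurve

open Polynomial in
lemma no_sqrt_aux (k : Type*) [Field k] (h2 : (2 : k) ≠ 0) (f : RatFunc k) :
    f ^ 2 ≠ RatFunc.X ^ 3 * (RatFunc.X - 64) := by
  have h64 : (64 : k) ≠ 0 := by
    have : (64 : k) = 2 ^ 6 := by norm_num
    rw [this]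
    exact pow_ne_zero _ h2
  intro heq
  set g : k[X] := X ^ 3 * (X - 64) with hg
  have hXg : (X - 64 : k[X]) ≠ 0 := by
    intro h
    have := congrArg (Polynomial.eval 0) h
    simp at this
    exact h64 this
  have hgne : g ≠ 0 := mul_ne_zero (pow_ne_zero _ Polynomial.X_ne_zero) hXg
  have hmap : (RatFunc.X ^ 3 * (RatFunc.X - 64) : RatFunc k) = algebraMap k[X] (RatFunc k) g := by
    simp [hg, map_mul, map_pow, map_sub, RatFunc.algebraMap_X, map_ofNat]
  have hfne : f ≠ 0 := by
    intro h
    rw [h] at heq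
    have : algebraMap k[X] (RatFunc k) g = 0 := by rw [← hmap, ← heq]; ring
    exact hgne (RatFunc.algebraMap_injective k (by simpa using this))
  -- clear denominators
  have hden : (algebraMap k[X] (RatFunc k)) f.denom ≠ 0 := by
    simpa using fun h => f.denom_ne_zero (RatFunc.algebraMap_injective k (by simpa using h))
  have hnum : f * algebraMap k[X] (RatFunc k) f.denom = algebraMap k[X] (RatFunc k) f.num := by
    rw [eq_comm, ← div_eq_iff hden, RatFunc.num_div_denom]
  have hpoly : f.num ^ 2 = g * f.denom ^ 2 := by
    apply RatFunc.algebraMap_injective k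
    rw [map_mul, map_pow, map_pow, ← hnum, ← hmap]
    rw [mul_pow, heq]
  have hnumne : f.num ≠ 0 := RatFunc.num_ne_zero hfne
  -- compare root multiplicities at 0
  have h1 : rootMultiplicity 0 (f.num ^ 2) = 2 * rootMultiplicity 0 f.num := by
    rw [sq, Polynomial.rootMultiplicity_mul (mul_ne_zero hnumne hnumne)]
    ring
  have hX3 : rootMultiplicity (0 : k) (X ^ 3) = 3 := by
    have := Polynomial.rootMultiplicity_X_sub_C_pow (R := k) 0 3
    simpa using this
  have hX64 : rootMultiplicity (0 : k) (X - 64) = 0 := by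
    apply Polynomial.rootMultiplicity_eq_zero
    simp [Polynomial.IsRoot]
    exact h64
  have h2' : rootMultiplicity 0 (g * f.denom ^ 2) =
      3 + 2 * rootMultiplicity 0 f.denom := by
    rw [Polynomial.rootMultiplicity_mul (mul_ne_zero hgne (pow_ne_zero _ f.denom_ne_zero)),
      hg, Polynomial.rootMultiplicity_mul (mul_ne_zero (pow_ne_zero _ Polynomial.X_ne_zero) hXg),
      hX3, hX64, sq, Polynomial.rootMultiplicity_mul
        (mul_ne_zero f.denom_ne_zero f.denom_ne_zero)]
    ring
  rw [hpoly, h2'] at h1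
  omega

/-- Over a field `k` of characteristic `≠ 2`, the elliptic curve `y² + txy = x³ + t³x` over
`k(t)` has exactly one nontrivial `2`-torsion point rational over `k(t)`, namely `(0,0)`.
(A nonzero point `(x,y)` is `2`-torsion iff `y = negY x y`.) -/
theorem stmt_3 (k : Type*) [Field k] (h2 : (2 : k) ≠ 0)
    (W : Affine (RatFunc k))
    (hW : W = { a₁ := RatFunc.X, a₂ := 0, a₃ := 0, a₄ := RatFunc.X ^ 3, a₆ := 0 }) :
    W.Nonsingular 0 0 ∧
    ∀ x y : RatFunc k, W.Nonsingular x y → (y = W.negY x y ↔ (x = 0 ∧ y = 0)) := by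
  subst hW
  have h2' : (2 : RatFunc k) ≠ 0 := by
    have := (map_ne_zero (algebraMap k (RatFunc k))).mpr h2
    simpa only [map_ofNat] using this
  have hXne : (RatFunc.X : RatFunc k) ≠ 0 := RatFunc.X_ne_zero
  constructor
  · rw [Affine.nonsingular_zero]
    exact ⟨rfl, Or.inr (pow_ne_zero _ hXne)⟩
  · intro x y hns
    constructor
    · intro hy
      have heq := hns.1
      rw [Affine.equation_iff] at heq
      simp only at heq
      -- heq : y ^ 2 + X * x * y + 0 * y = x ^ 3 + 0 * x ^ 2 + X ^ 3 * x + 0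
      rw [Affine.negY] at hy
      simp only at hy
      -- hy : y = -y - X * x - 0
      have h2y : 2 * y = -(RatFunc.X * x) := by linear_combination hy
      -- derive the cubic
      have hcubic : x * (4 * x ^ 2 + RatFunc.X ^ 2 * x + 4 * RatFunc.X ^ 3) = 0 := by
        have := congrArg (fun z => 4 * z) heq
        linear_combination (2 * y + RatFunc.X * x) * h2y - this
      rcases mul_eq_zero.mp hcubic with hx | hquad
      · refine ⟨hx, ?_⟩
        have : 2 * y = 0 := by rw [h2y, hx]; ring
        exact (mul_eq_zero.mp this).elim (fun h => absurd h h2') id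
      · exfalso
        apply no_sqrt_aux k h2 (8 * x + RatFunc.X ^ 2)
        linear_combination 16 * hquad
    · rintro ⟨hx, hy⟩
      rw [Affine.negY, hx, hy]
      simp
end

section
/- Over a field k of characteristic ≠ 2, the point (0,0) on the elliptic curve y² + txy + t²y = x³ + tx² over k(t) is a point of order exactly 4. -/
open WeierstrassCurve

open Classical in
/-- Over a field `k` of characteristic `≠ 2`, the point `(0,0)` on the elliptic curve
`y² + txy + t²y = x³ + tx²` over `k(t)` is a point of order exactly `4`. -/
theorem stmt_4 (k : Type*) [Field k] (h2 : (2 : k) ≠ 0)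
    (W : Affine (RatFunc k))
    (hW : W = { a₁ := RatFunc.X, a₂ := RatFunc.X, a₃ := RatFunc.X ^ 2,
                a₄ := 0, a₆ := 0 }) :
    ∃ h : W.Nonsingular 0 0, addOrderOf (Affine.Point.some 0 0 h) = 4 := by
  subst hW
  set W : Affine (RatFunc k) :=
    { a₁ := RatFunc.X, a₂ := RatFunc.X, a₃ := RatFunc.X ^ 2, a₄ := 0, a₆ := 0 } with hWdef
  have htX : (RatFunc.X : RatFunc k) ≠ 0 := RatFunc.X_ne_zero
  have htX2 : (RatFunc.X : RatFunc k) ^ 2 ≠ 0 := pow_ne_zero 2 htX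
  -- (0,0) is nonsingular
  have hP : W.Nonsingular 0 0 := by
    rw [Affine.nonsingular_zero]
    exact ⟨rfl, Or.inl htX2⟩
  -- y-coordinate condition for doubling
  have hyP : (0 : RatFunc k) ≠ W.negY 0 0 := by
    simp only [Affine.negY, hWdef, mul_zero, neg_zero, zero_sub, sub_zero]
    exact fun h => htX2 (neg_eq_zero.mp h.symm)
  -- the slope at (0,0) is 0
  have hslope : W.slope 0 0 0 0 = 0 := by
    rw [Affine.slope_of_Y_ne rfl hyP]
    simp [hWdef]
  have hQ := Affine.nonsingular_add hP hP fun h => hyP h.2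
  -- 2P = Q, with Q self-negating
  have hyQ : W.addY 0 0 0 (W.slope 0 0 0 0) =
      W.negY (W.addX 0 0 (W.slope 0 0 0 0)) (W.addY 0 0 0 (W.slope 0 0 0 0)) := by
    rw [hslope]
    simp only [hslope, Affine.addY, Affine.negAddY, Affine.addX, Affine.negY, hWdef]
    ring
  refine ⟨hP, ?_⟩
  have h2P : (2 : ℕ) • Affine.Point.some _ _ hP = Affine.Point.some _ _ hQ := by
    rw [two_nsmul, Affine.Point.add_self_of_Y_ne hyP]
  have hnot : ¬ ((2 : ℕ) ^ 1 • Affine.Point.some _ _ hP = 0) := by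
    rw [pow_one, h2P]
    exact Affine.Point.some_ne_zero hQ
  have hfin : (2 : ℕ) ^ (1 + 1) • Affine.Point.some _ _ hP = 0 := by
    have : (2 : ℕ) ^ (1 + 1) • Affine.Point.some _ _ hP
        = (2 : ℕ) • ((2 : ℕ) • Affine.Point.some _ _ hP) := by
      rw [smul_smul]; norm_num
    rw [this, h2P, two_nsmul, Affine.Point.add_self_of_Y_eq hyQ]
  have := addOrderOf_eq_prime_pow (p := 2) (n := 1) hnot hfin
  norm_num at this
  exact this
end

section
/- Let k be a field of characteristic ≠ 2,3. The rational elliptic surface with Weierstrass equation y² = x³ + (−3t⁴ + 24t)x + 2t⁶ + 40t³ − 16 over k(t), base-changed via t ↦ s² − 1, admits no section N⁻ = (x(s), y(s)) with x(s) = −3 + x₂s² + s⁴ and y(s) = y₁s + y₃s³ + y₅s⁵ (polynomials over k). That is, substituting such x(s), y(s) into the base-changed equation forces y₁ = y₅ = 0, y₃ = ±8, x₂ = −2, and then 144 = 0 in k, a contradiction. -/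
open Polynomial

/-- Let `k` be a field of characteristic `≠ 2,3`.  The rational elliptic surface
`y² = x³ + (−3t⁴+24t)x + 2t⁶+40t³−16`, base-changed via `t ↦ s²−1`, admits no section
`N⁻ = (x(s), y(s))` with `x(s) = −3 + x₂s² + s⁴` and `y(s) = y₁s + y₃s³ + y₅s⁵`:
there are no constants `x₂, y₁, y₃, y₅ ∈ k` for which substituting such `x(s)`, `y(s)`
into the base-changed Weierstrass equation gives a polynomial identity. -/
theorem stmt_8 (k : Type*) [Field k] (h2 : (2 : k) ≠ 0) (h3 : (3 : k) ≠ 0) :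
    ¬ ∃ x₂ y₁ y₃ y₅ : k,
      (C y₁ * X + C y₃ * X ^ 3 + C y₅ * X ^ 5) ^ 2 =
        (-3 + C x₂ * X ^ 2 + X ^ 4 : k[X]) ^ 3
          + (-3 * (X ^ 2 - 1) ^ 4 + 24 * (X ^ 2 - 1)) * (-3 + C x₂ * X ^ 2 + X ^ 4)
          + (2 * (X ^ 2 - 1) ^ 6 + 40 * (X ^ 2 - 1) ^ 3 - 16) := by
  rintro ⟨x₂, y₁, y₃, y₅, h⟩
  have h' : (C (y₁^2)) * X^2 + C (2*y₁*y₃) * X^4 + C (y₃^2+2*y₁*y₅) * X^6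
      + C (2*y₃*y₅) * X^8 + C (y₅^2) * X^10
      = C (-9*x₂^2 + 36*x₂ - 36) * X^4 + C (x₂^3-36*x₂) * X^6
        + C (3*x₂^2 + 12*x₂ + 12) * X^8 := by
    simp only [map_add, map_sub, map_mul, map_pow, map_neg, map_ofNat]
    linear_combination h
  have c2 := congrArg (fun p => coeff p 2) h'
  have c4 := congrArg (fun p => coeff p 4) h'
  have c8 := congrArg (fun p => coeff p 8) h'
  have c10 := congrArg (fun p => coeff p 10) h'
  simp only [coeff_add, coeff_C_mul, coeff_X_pow] at c2 c4 c8 c10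
  norm_num at c2 c4 c8 c10
  have hy1 : y₁ = 0 := c2
  have hy5 : y₅ = 0 := c10
  subst hy1 hy5
  have h72 : (72:k) ≠ 0 := by
    have hne : (2:k)^3 * 3^2 ≠ 0 := mul_ne_zero (pow_ne_zero _ h2) (pow_ne_zero _ h3)
    have e : (2:k)^3 * 3^2 = 72 := by norm_num
    rw [e] at hne; exact hne
  have h72x : (72:k) * x₂ = 0 := by linear_combination -c4 - 3*c8
  have hx0 : x₂ = 0 := by
    rcases mul_eq_zero.mp h72x with h' | h'
    · exact absurd h' h72
    · exact h'
  subst hx0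
  have h12 : (12:k) = 0 := by linear_combination -c8
  have hne : (2:k)^2 * 3 ≠ 0 := mul_ne_zero (pow_ne_zero _ h2) h3
  apply hne
  linear_combination h12
end

section
/- Let k be a field of characteristic ≠ 2 and consider the curve y² = x³ + 2(s⁴+1)x² + (s⁴−1)²x over k(s). The point P = (−(s−i)²(s²−1), −2s(s−i)²(s²−1)), where i² = −1, lies on the curve, and 2P = (−(s²−1)², 0) in the group law. -/
/-!
The curve is `y² = x (x + (s² + 1)²) (x + (s² - 1)²)`, so `T = (-(s² - 1)², 0)` has order `2`
and `2P = T` as soon as `2P` and `T` have the same X-coordinate. By the doubling formula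
`x(2P) = ((x₀² - a₄) / (2 y₀))²`, and since `s² + 1 = (s - i)(s + i)` one finds
`(x₀² - a₄) / (2 y₀) = i (s² - 1)`, whose square is `-(s² - 1)²`.
-/

open WeierstrassCurve

namespace WeierstrassCurve.Affine

variable {F : Type*} [Field F] {W : Affine F}

lemma some_eq_some_of_X_eq_of_Y_eq_negY {x₁ y₁ x₂ y₂ : F}
    {h₁ : W.Nonsingular x₁ y₁} {h₂ : W.Nonsingular x₂ y₂}
    (hx : x₁ = x₂) (hy₂ : y₂ = W.negY x₂ y₂) : Point.some x₁ y₁ h₁ = Point.some x₂ y₂ h₂ := by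
  have hy : y₁ = y₂ := (Y_eq_of_X_eq h₁.1 h₂.1 hx).elim id (·.trans hy₂.symm)
  subst hx hy
  rfl

lemma two_zsmul_some_eq_of_addX_eq [DecidableEq F] {x y x' y' : F}
    {h : W.Nonsingular x y} {h' : W.Nonsingular x' y'} (hy : y ≠ W.negY x y)
    (hx : W.addX x x (W.slope x x y y) = x') (hy' : y' = W.negY x' y') :
    (2 : ℤ) • Point.some x y h = Point.some x' y' h' := by
  rw [two_zsmul, Point.add_self_of_Y_ne hy]
  exact some_eq_some_of_X_eq_of_Y_eq_negY hx hy'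

lemma addX_slope_self_eq_of_a₁_a₃_a₆ [DecidableEq F] (ha₁ : W.a₁ = 0) (ha₃ : W.a₃ = 0)
    (ha₆ : W.a₆ = 0) {x y : F} (h : W.Equation x y) (hy : y ≠ W.negY x y) :
    W.addX x x (W.slope x x y y) = ((x ^ 2 - W.a₄) / (2 * y)) ^ 2 := by
  rw [equation_iff, ha₁, ha₃, ha₆] at h
  have h2y : 2 * y ≠ 0 := by
    contrapose! hy
    simp only [negY, ha₁, ha₃]
    linear_combination hy
  have h2 : (2 : F) ≠ 0 := left_ne_zero_of_mul h2y
  have hy0 : y ≠ 0 := right_ne_zero_of_mul h2y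
  rw [slope_of_Y_ne rfl hy]
  simp only [addX, negY, ha₁, ha₃, zero_mul, sub_zero, sub_neg_eq_add, ← two_mul]
  field_simp
  linear_combination (-(4 * W.a₂ + 8 * x)) * h

end WeierstrassCurve.Affine

section Z2Z4Family

variable {F : Type*} [Field F] {s j : F}

abbrev z2z4Curve (s : F) : Affine F :=
  { a₁ := 0, a₂ := 2 * (s ^ 4 + 1), a₃ := 0, a₄ := (s ^ 4 - 1) ^ 2, a₆ := 0 }

lemma z2z4Curve_negY (x y : F) : (z2z4Curve s).negY x y = -y := by
  simp [Affine.negY]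

lemma z2z4Curve_equation_of_sq_eq_neg_one (hj : j ^ 2 = -1) :
    (z2z4Curve s).Equation (-(s - j) ^ 2 * (s ^ 2 - 1)) (-2 * s * (s - j) ^ 2 * (s ^ 2 - 1)) := by
  -- with `y = 2 s x` the equation reduces to `x² + 2 (s² - 1)² x + (s⁴ - 1)² = 0`
  have key : ((s - j) ^ 2 - (s ^ 2 - 1)) ^ 2 + 4 * s ^ 2 = 0 := by
    linear_combination (j ^ 2 + 1 - 4 * s * j + 4 * s ^ 2) * hj
  rw [Affine.equation_iff]
  linear_combination (s - j) ^ 2 * (s ^ 2 - 1) ^ 3 * key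

lemma z2z4Curve_nonsingular_twoTorsion (h2 : (2 : F) ≠ 0) (hs : s ≠ 0) (hs1 : s ^ 2 - 1 ≠ 0) :
    (z2z4Curve s).Nonsingular (-(s ^ 2 - 1) ^ 2) 0 := by
  refine (Affine.nonsingular_iff _ _).mpr ⟨(Affine.equation_iff _ _).mpr (by ring), Or.inl ?_⟩
  have : (2 * s * (s ^ 2 - 1)) ^ 2 ≠ 0 := by positivity
  contrapose! this
  linear_combination this

lemma z2z4Curve_two_zsmul_eq [DecidableEq F] (h2 : (2 : F) ≠ 0) (hj : j ^ 2 = -1) (hs : s ≠ 0)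
    (hs1 : s ^ 2 - 1 ≠ 0) (hsj : s - j ≠ 0) :
    ∃ (hP : (z2z4Curve s).Nonsingular (-(s - j) ^ 2 * (s ^ 2 - 1))
              (-2 * s * (s - j) ^ 2 * (s ^ 2 - 1)))
      (hQ : (z2z4Curve s).Nonsingular (-(s ^ 2 - 1) ^ 2) 0),
      (2 : ℤ) • Affine.Point.some _ _ hP = Affine.Point.some _ _ hQ := by
  have hEq := z2z4Curve_equation_of_sq_eq_neg_one (s := s) hj
  set x := -(s - j) ^ 2 * (s ^ 2 - 1)
  set y := -2 * s * (s - j) ^ 2 * (s ^ 2 - 1)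
  have hy0 : y ≠ 0 := by simp [y, h2, hs, hsj, hs1]
  have hy : y ≠ (z2z4Curve s).negY x y := by
    rw [z2z4Curve_negY]
    exact fun h ↦ hy0 (mul_left_cancel₀ h2 (by linear_combination h))
  have hslope : (x ^ 2 - (z2z4Curve s).a₄) / (2 * y) = j * (s ^ 2 - 1) := by
    rw [div_eq_iff (mul_ne_zero h2 hy0)]
    linear_combination -(s ^ 2 - 1) ^ 2 * (2 * s ^ 2 + 1 - j ^ 2) * hj
  refine ⟨(Affine.nonsingular_iff _ _).mpr ⟨hEq, Or.inr hy⟩,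
    z2z4Curve_nonsingular_twoTorsion h2 hs hs1,
    Affine.two_zsmul_some_eq_of_addX_eq hy ?_ (by rw [z2z4Curve_negY, neg_zero])⟩
  rw [Affine.addX_slope_self_eq_of_a₁_a₃_a₆ rfl rfl rfl hEq hy, hslope]
  linear_combination (s ^ 2 - 1) ^ 2 * hj

end Z2Z4Family

lemma RatFunc.X_sub_C_ne_zero {K : Type*} [Field K] (a : K) :
    (RatFunc.X - RatFunc.C a : RatFunc K) ≠ 0 := by
  have := RatFunc.algebraMap_ne_zero (Polynomial.X_sub_C_ne_zero a)
  rwa [map_sub, RatFunc.algebraMap_X, RatFunc.algebraMap_C] at this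

open Classical in
/-- Let `k` be a field of characteristic `≠ 2` containing `i` with `i² = −1`, and consider
the curve `y² = x³ + 2(s⁴+1)x² + (s⁴−1)²x` over `k(s)`.  The point
`P = (−(s−i)²(s²−1), −2s(s−i)²(s²−1))` lies on the curve, and `2P = (−(s²−1)², 0)` in the
group law. -/
theorem stmt_14 (k : Type*) [Field k] (h2 : (2 : k) ≠ 0)
    (i : k) (hi : i ^ 2 = -1)
    (s : RatFunc k) (hs : s = RatFunc.X)
    (W : Affine (RatFunc k))
    (hW : W = { a₁ := 0, a₂ := 2 * (s ^ 4 + 1), a₃ := 0,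
                a₄ := (s ^ 4 - 1) ^ 2, a₆ := 0 }) :
    ∃ (hP : W.Nonsingular (-(s - RatFunc.C i) ^ 2 * (s ^ 2 - 1))
              (-2 * s * (s - RatFunc.C i) ^ 2 * (s ^ 2 - 1)))
      (hQ : W.Nonsingular (-(s ^ 2 - 1) ^ 2) 0),
      (2 : ℤ) • Affine.Point.some _ _ hP = Affine.Point.some _ _ hQ := by
  subst hs hW
  refine z2z4Curve_two_zsmul_eq ?_ ?_ RatFunc.X_ne_zero ?_ (RatFunc.X_sub_C_ne_zero i)
  · rw [← map_ofNat RatFunc.C 2]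
    exact (map_ne_zero _).mpr h2
  · rw [← map_pow, hi, map_neg, map_one]
  · have hX1 : (RatFunc.X : RatFunc k) ^ 2 - 1 =
        (RatFunc.X - RatFunc.C 1) * (RatFunc.X - RatFunc.C (-1)) := by
      simp only [map_one, map_neg]
      ring
    rw [hX1]
    exact mul_ne_zero (RatFunc.X_sub_C_ne_zero 1) (RatFunc.X_sub_C_ne_zero (-1))
end
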